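/- arXiv:2504.08327 — 3 statements merged into one kernel-verified Lean document; each statement's English description precedes it below -/
import Mathlib

section
/- Let G be a triangulation of an orientable surface and φ a proper 4-coloring of G. For i ∈ {1,2,3,4}, let nᵢ be the number of vertices of odd degree colored i. Then n₁ ≡ n₂ ≡ n₃ ≡ n₄ (mod 2). -/
/-!
Fix colours `i ≠ j` and let `s` be the set of vertices coloured `i` or `j`. Modulo 2, `nᵢ + nⱼ`
is the degree sum over `s`, i.e. the number of darts leaving `s` plus the even number of darts
inside `s`. The three vertices of a face have distinct colours, so each face has vertices both
in `s` and outside it, and exactly one of its three sides is a dart leaving `s`. As every dart is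
a side of exactly one face, the face permutation of the darts has all orbits of size 3, so the
number of darts, `2|E|`, is three times the number of darts leaving `s`, which is thus even.
-/

/-- A (combinatorial) triangulation of an orientable surface: a set of
oriented triangular faces, closed under rotation, whose sides are edges of
`G`, such that every directed edge of `G` lies in exactly one oriented face.
(Consistency of the orientations of the faces encodes orientability.) -/
structure OrientedTriangulation {V : Type*} (G : SimpleGraph V) where
  faces : Set (V × V × V)
  rot : ∀ a b c, (a, b, c) ∈ faces → (b, c, a) ∈ faces
  adj_of_mem : ∀ a b c, (a, b, c) ∈ faces → G.Adj a b
  unique_face : ∀ a b, G.Adj a b → ∃! c, (a, b, c) ∈ faces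

open Finset

namespace SimpleGraph

variable {V : Type*} [Fintype V] [DecidableEq V] (G : SimpleGraph V) [DecidableRel G.Adj]

theorem sum_degree_eq_card_dart_fst_mem (s : Finset V) :
    ∑ v ∈ s, G.degree v = #{d : G.Dart | d.fst ∈ s} := by
  simp only [← dart_fst_fiber_card_eq_degree]
  exact sum_card_fiberwise_eq_card_filter _ _ _

theorem card_dart_fst_mem_snd_mem (s : Finset V) :
    #{d : G.Dart | d.fst ∈ s ∧ d.snd ∈ s} = 2 * #{e ∈ G.edgeFinset | ∀ v ∈ e, v ∈ s} := by
  rw [mul_comm, ← sum_const_nat fun e he =>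
    G.dart_edge_fiber_card e (mem_edgeFinset.1 (mem_filter.1 he).1),
    sum_card_fiberwise_eq_card_filter]
  congr 1
  ext d
  simp [Dart.edge]

theorem even_sum_degree_iff (s : Finset V) :
    Even (∑ v ∈ s, G.degree v) ↔ Even #{d : G.Dart | d.fst ∈ s ∧ d.snd ∉ s} := by
  rw [sum_degree_eq_card_dart_fst_mem,
    ← card_filter_add_card_filter_not (fun d : G.Dart => d.snd ∈ s), filter_filter, filter_filter,
    card_dart_fst_mem_snd_mem, Nat.even_add]
  simp

end SimpleGraph

theorem Fin.four_three_distinct_not_all_mem_pair {i j a b c : Fin 4} (hij : i ≠ j) (hab : a ≠ b)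
    (hbc : b ≠ c) (hca : c ≠ a) :
    ¬((a = i ∨ a = j) ∧ (b = i ∨ b = j) ∧ (c = i ∨ c = j)) ∧
      ¬(¬(a = i ∨ a = j) ∧ ¬(b = i ∨ b = j) ∧ ¬(c = i ∨ c = j)) := by
  revert i j a b c
  decide

theorem Equiv.Perm.card_eq_mul_card_filter {α : Type*} [Fintype α] (σ : Equiv.Perm α) (n : ℕ)
    (p : α → Prop) [DecidablePred p] (h : ∀ a, #{k ∈ range n | p ((σ ^ k) a)} = 1) :
    Fintype.card α = n * #{a | p a} := by
  calc Fintype.card α = ∑ a, #{k ∈ range n | p ((σ ^ k) a)} := by simp [h]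
    _ = ∑ k ∈ range n, #{a | p ((σ ^ k) a)} := by
      simp only [card_filter]
      exact sum_comm
    _ = n * #{a | p a} := by
      rw [sum_const_nat fun k _ => ?_, card_range]
      simp only [card_filter]
      exact Equiv.sum_comp (σ ^ k) fun a => if p a then 1 else 0

namespace OrientedTriangulation

variable {V : Type*} {G : SimpleGraph V} (T : OrientedTriangulation G)

noncomputable def apex (d : G.Dart) : V := (T.unique_face _ _ d.adj).choose

theorem apex_mem (d : G.Dart) : (d.fst, d.snd, T.apex d) ∈ T.faces :=
  (T.unique_face _ _ d.adj).choose_spec.1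

theorem apex_eq {d : G.Dart} {c : V} (h : (d.fst, d.snd, c) ∈ T.faces) : T.apex d = c :=
  ((T.unique_face _ _ d.adj).choose_spec.2 c h).symm

theorem adj_snd_apex (d : G.Dart) : G.Adj d.snd (T.apex d) :=
  T.adj_of_mem _ _ _ (T.rot _ _ _ (T.apex_mem d))

theorem adj_apex_fst (d : G.Dart) : G.Adj (T.apex d) d.fst :=
  T.adj_of_mem _ _ _ (T.rot _ _ _ (T.rot _ _ _ (T.apex_mem d)))

noncomputable def next (d : G.Dart) : G.Dart := ⟨(d.snd, T.apex d), T.adj_snd_apex d⟩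

@[simp] theorem next_fst (d : G.Dart) : (T.next d).fst = d.snd := rfl

@[simp] theorem next_snd (d : G.Dart) : (T.next d).snd = T.apex d := rfl

theorem apex_next (d : G.Dart) : T.apex (T.next d) = d.fst :=
  T.apex_eq (T.rot _ _ _ (T.apex_mem d))

theorem next_next_next (d : G.Dart) : T.next (T.next (T.next d)) = d := by
  have h : T.apex (T.next (T.next d)) = d.snd := T.apex_next (T.next d)
  ext <;> simp [apex_next, h]

@[simps] noncomputable def facePerm : Equiv.Perm G.Dart where
  toFun := T.next
  invFun d := T.next (T.next d)
  left_inv := T.next_next_next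
  right_inv := T.next_next_next

theorem even_card_dart_leaving [Fintype V] [DecidableEq V] [DecidableRel G.Adj] (s : Finset V)
    (hs : ∀ d : G.Dart, ¬(d.fst ∈ s ∧ d.snd ∈ s ∧ T.apex d ∈ s) ∧
      ¬(d.fst ∉ s ∧ d.snd ∉ s ∧ T.apex d ∉ s)) :
    Even #{d : G.Dart | d.fst ∈ s ∧ d.snd ∉ s} := by
  have h3 : Fintype.card G.Dart = 3 * #{d : G.Dart | d.fst ∈ s ∧ d.snd ∉ s} := by
    refine T.facePerm.card_eq_mul_card_filter 3 _ fun d => ?_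
    simp only [card_filter, sum_range_succ, range_zero, sum_empty, pow_zero, pow_one, sq,
      Equiv.Perm.mul_apply, Equiv.Perm.one_apply, facePerm_apply, next_fst, next_snd, apex_next]
    obtain ⟨hin, hout⟩ := hs d
    clear hs
    split_ifs <;> simp_all
  have h2 : Even (3 * #{d : G.Dart | d.fst ∈ s ∧ d.snd ∉ s}) :=
    h3 ▸ G.dart_card_eq_twice_card_edges ▸ even_two_mul _
  exact (Nat.even_mul.1 h2).resolve_left (by decide)

end OrientedTriangulation

/-- Fisk: For a proper 4-coloring of a triangulation of an
orientable surface, the numbers of odd-degree vertices in the four color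
classes all have the same parity. -/
theorem stmt_10 {V : Type*} [Fintype V] (G : SimpleGraph V) [DecidableRel G.Adj]
    (T : OrientedTriangulation G) (φ : G.Coloring (Fin 4)) :
    ∀ i j : Fin 4,
      {v : V | Odd (G.degree v) ∧ φ v = i}.ncard % 2 =
      {v : V | Odd (G.degree v) ∧ φ v = j}.ncard % 2 := by
  classical
  intro i j
  rcases eq_or_ne i j with rfl | hij
  · rfl
  have hsum : Even (∑ v ∈ {v | φ v = i ∨ φ v = j}, G.degree v) := by
    refine (G.even_sum_degree_iff _).2 (T.even_card_dart_leaving _ fun d => ?_)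
    simpa using Fin.four_three_distinct_not_all_mem_pair hij (φ.valid d.adj)
      (φ.valid (T.adj_snd_apex d)) (φ.valid (T.adj_apex_fst d))
  rw [filter_or, sum_union (disjoint_filter.2 fun v _ hi hj => hij (hi.symm.trans hj)),
    Nat.even_add, even_sum_iff_even_card_odd, even_sum_iff_even_card_odd] at hsum
  simp only [Set.ncard_eq_toFinset_card', Set.toFinset_ofPred, filter_filter, and_comm] at hsum ⊢
  rw [Nat.even_iff, Nat.even_iff] at hsum
  omega
end

section
/- Let H be a plane graph whose outer face is bounded by an induced 4-cycle Q = v₁v₂v₃v₄. Construct G from H by adding an outer 4-cycle K = u₁u₂u₃u₄ bounding the new outer face, together with edges uᵢvᵢ and uᵢv_{i+1} for i ∈ {1,2,3,4} (indices mod 4). Then G has a proper 4-coloring φ with φ(u₁)=φ(u₃) and φ(u₂)=φ(u₄) if and only if H has a proper 4-coloring ψ with ψ(v₁)=ψ(v₃) and ψ(v₂)=ψ(v₄). -/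
open Set Topology

/-- `A` is an arc (homeomorphic image of `[0,1]`) from `p` to `q` in the plane. -/
def IsArc (p q : ℝ × ℝ) (A : Set (ℝ × ℝ)) : Prop :=
  ∃ γ : Path p q, Function.Injective γ ∧ A = Set.range γ

/-- A drawing of the simple graph `G` in the plane without crossings:
vertices are mapped to distinct points, each edge to an arc joining its
endpoints, arcs avoid other vertices, and distinct edges meet only at
common endpoints. -/
structure PlaneEmbedding {V : Type*} (G : SimpleGraph V) where
  pos : V → ℝ × ℝ
  pos_inj : Function.Injective pos
  arc : V → V → Set (ℝ × ℝ)
  arc_symm : ∀ u v, arc u v = arc v u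
  arc_isArc : ∀ ⦃u v⦄, G.Adj u v → IsArc (pos u) (pos v) (arc u v)
  arc_vertex : ∀ ⦃u v⦄, G.Adj u v → ∀ w, pos w ∈ arc u v → w = u ∨ w = v
  arc_meet : ∀ ⦃u v u' v'⦄, G.Adj u v → G.Adj u' v' → s(u, v) ≠ s(u', v') →
    arc u v ∩ arc u' v' ⊆ ({pos u, pos v} ∩ {pos u', pos v'} : Set (ℝ × ℝ))

namespace PlaneEmbedding

variable {V : Type*} {G : SimpleGraph V} (emb : PlaneEmbedding G)

/-- The set of points of the plane used by the drawing. -/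
def drawing : Set (ℝ × ℝ) :=
  Set.range emb.pos ∪ ⋃ (u) (v) (_ : G.Adj u v), emb.arc u v

/-- A face of the drawing: a connected component of the complement. -/
def IsFace (F : Set (ℝ × ℝ)) : Prop :=
  ∃ p ∈ emb.drawingᶜ, F = connectedComponentIn emb.drawingᶜ p

/-- The outer face is the unbounded face. -/
def IsOuterFace (F : Set (ℝ × ℝ)) : Prop :=
  emb.IsFace F ∧ ¬ Bornology.IsBounded F

/-- The face `F` is bounded by the 4-cycle `x₁x₂x₃x₄`. -/
def BoundedByQuad (F : Set (ℝ × ℝ)) (x₁ x₂ x₃ x₄ : V) : Prop :=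
  frontier F = emb.arc x₁ x₂ ∪ emb.arc x₂ x₃ ∪ emb.arc x₃ x₄ ∪ emb.arc x₄ x₁

/-- The face `F` is bounded by the triangle `abc`. -/
def BoundedByTri (F : Set (ℝ × ℝ)) (a b c : V) : Prop :=
  frontier F = emb.arc a b ∪ emb.arc b c ∪ emb.arc c a

/-- Every triangle of `G` bounds a face of the drawing. -/
def TrianglesFacial : Prop :=
  ∀ a b c : V, G.Adj a b → G.Adj b c → G.Adj a c →
    ∃ F, emb.IsFace F ∧ emb.BoundedByTri F a b c

/-- All faces other than `O` are bounded by triangles. -/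
def InternalFacesTriangular (O : Set (ℝ × ℝ)) : Prop :=
  ∀ F, emb.IsFace F → F ≠ O →
    ∃ a b c : V, G.Adj a b ∧ G.Adj b c ∧ G.Adj a c ∧ emb.BoundedByTri F a b c

end PlaneEmbedding

/-- The union of the bounded complementary regions of a set `C` in the plane:
the points strictly "inside" `C`. -/
def insideRegion (C : Set (ℝ × ℝ)) : Set (ℝ × ℝ) :=
  {p | p ∉ C ∧ Bornology.IsBounded (connectedComponentIn Cᶜ p)}

/-- A plane graph whose outer face is bounded by the 4-cycle `x₁x₂x₃x₄`. -/
structure QuadCanvas {V : Type*} (G : SimpleGraph V) (x₁ x₂ x₃ x₄ : V) where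
  emb : PlaneEmbedding G
  outer : Set (ℝ × ℝ)
  outer_isOuter : emb.IsOuterFace outer
  adj12 : G.Adj x₁ x₂
  adj23 : G.Adj x₂ x₃
  adj34 : G.Adj x₃ x₄
  adj41 : G.Adj x₄ x₁
  ne13 : x₁ ≠ x₃
  ne24 : x₂ ≠ x₄
  boundary : emb.BoundedByQuad outer x₁ x₂ x₃ x₄

/-- The graph obtained from `H` by adding an outer 4-cycle `u₀u₁u₂u₃`
(the `Sum.inr` vertices) around the 4-cycle `v₀v₁v₂v₃`, with `uᵢ` joined to
`vᵢ` and `vᵢ₊₁`. -/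
def ringExtension {V : Type*} (H : SimpleGraph V) (v : Fin 4 → V) :
    SimpleGraph (V ⊕ Fin 4) :=
  SimpleGraph.fromRel fun a b =>
    match a, b with
    | Sum.inl x, Sum.inl y => H.Adj x y
    | Sum.inr i, Sum.inr j => j = i + 1
    | Sum.inr i, Sum.inl x => x = v i ∨ x = v (i + 1)
    | Sum.inl _, Sum.inr _ => False


private lemma fin4_chain (a b x0 x1 x2 x3 : Fin 4) (hab : a ≠ b)
    (h0a : x0 ≠ a) (h0b : x0 ≠ b) (h1a : x1 ≠ a) (h1b : x1 ≠ b)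
    (h2a : x2 ≠ a) (h2b : x2 ≠ b) (h3a : x3 ≠ a) (h3b : x3 ≠ b)
    (h01 : x0 ≠ x1) (h12 : x1 ≠ x2) (h23 : x2 ≠ x3) :
    x0 = x2 ∧ x1 = x3 := by
  revert a b x0 x1 x2 x3; decide

private lemma fin4_exists (c d : Fin 4) (h : c ≠ d) :
    ∃ a b : Fin 4, a ≠ b ∧ a ≠ c ∧ a ≠ d ∧ b ≠ c ∧ b ≠ d := by
  revert c d; decide

private lemma ringExt_adj_inl {V : Type*} (H : SimpleGraph V) (v : Fin 4 → V) {x y : V}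
    (h : H.Adj x y) : (ringExtension H v).Adj (Sum.inl x) (Sum.inl y) := by
  rw [ringExtension, SimpleGraph.fromRel_adj]
  exact ⟨by simpa using h.ne, Or.inl h⟩

private lemma ringExt_adj_rr {V : Type*} (H : SimpleGraph V) (v : Fin 4 → V) (i : Fin 4) :
    (ringExtension H v).Adj (Sum.inr i) (Sum.inr (i + 1)) := by
  rw [ringExtension, SimpleGraph.fromRel_adj]
  refine ⟨?_, Or.inl rfl⟩
  simp only [ne_eq, Sum.inr.injEq]
  revert i; decide

private lemma ringExt_adj_rl {V : Type*} (H : SimpleGraph V) (v : Fin 4 → V) (i : Fin 4) {x : V}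
    (h : x = v i ∨ x = v (i + 1)) : (ringExtension H v).Adj (Sum.inr i) (Sum.inl x) := by
  rw [ringExtension, SimpleGraph.fromRel_adj]
  exact ⟨Sum.inr_ne_inl, Or.inl h⟩

/-- Let `H` be a plane graph whose outer face is bounded by the
induced 4-cycle `v₀v₁v₂v₃`, and let `G` be obtained by adding an outer
4-cycle `u₀u₁u₂u₃` with `uᵢ` adjacent to `vᵢ, vᵢ₊₁`.  Then `G` has a proper
4-coloring bichromatic on the `u`-cycle iff `H` has one bichromatic on the
`v`-cycle. -/
theorem stmt_11 {V : Type*} (H : SimpleGraph V) (v : Fin 4 → V)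
    (C : QuadCanvas H (v 0) (v 1) (v 2) (v 3))
    (hind02 : ¬ H.Adj (v 0) (v 2)) (hind13 : ¬ H.Adj (v 1) (v 3)) :
    (∃ φ : (ringExtension H v).Coloring (Fin 4),
        φ (Sum.inr 0) = φ (Sum.inr 2) ∧ φ (Sum.inr 1) = φ (Sum.inr 3)) ↔
      (∃ ψ : H.Coloring (Fin 4), ψ (v 0) = ψ (v 2) ∧ ψ (v 1) = ψ (v 3)) := by
  constructor
  · rintro ⟨φ, h02, h13⟩
    have hval : ∀ {x y : V}, H.Adj x y → φ (Sum.inl x) ≠ φ (Sum.inl y) :=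
      fun h => φ.valid (ringExt_adj_inl H v h)
    have hrl : ∀ (i : Fin 4) (x : V), (x = v i ∨ x = v (i + 1)) →
        φ (Sum.inr i) ≠ φ (Sum.inl x) := fun i x h => φ.valid (ringExt_adj_rl H v i h)
    have hab : φ (Sum.inr 0) ≠ φ (Sum.inr 1) := φ.valid (ringExt_adj_rr H v 0)
    have e30 : v (0 : Fin 4) = v (3 + 1) := congrArg v (by decide)
    have e12 : v (2 : Fin 4) = v (1 + 1) := congrArg v (by decide)
    have e23 : v (3 : Fin 4) = v (2 + 1) := congrArg v (by decide)
    have key := fin4_chain (φ (Sum.inr 0)) (φ (Sum.inr 1))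
      (φ (Sum.inl (v 0))) (φ (Sum.inl (v 1))) (φ (Sum.inl (v 2))) (φ (Sum.inl (v 3))) hab
      (Ne.symm (hrl 0 (v 0) (Or.inl rfl)))
      (Ne.symm (h13 ▸ hrl 3 (v 0) (Or.inr e30)))
      (Ne.symm (hrl 0 (v 1) (Or.inr rfl)))
      (Ne.symm (hrl 1 (v 1) (Or.inl rfl)))
      (Ne.symm (h02 ▸ hrl 2 (v 2) (Or.inl rfl)))
      (Ne.symm (hrl 1 (v 2) (Or.inr e12)))
      (Ne.symm (h02 ▸ hrl 2 (v 3) (Or.inr e23)))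
      (Ne.symm (h13 ▸ hrl 3 (v 3) (Or.inl rfl)))
      (hval C.adj12) (hval C.adj23) (hval C.adj34)
    exact ⟨⟨fun x => φ (Sum.inl x), fun {x y} h => hval h⟩, key.1, key.2⟩
  · rintro ⟨ψ, hv02, hv13⟩
    obtain ⟨a, b, hab, hac, had, hbc, hbd⟩ := fin4_exists (ψ (v 0)) (ψ (v 1)) (ψ.valid C.adj12)
    classical
    set f : V ⊕ Fin 4 → Fin 4 := fun z =>
      match z with
      | Sum.inl x => ψ x
      | Sum.inr i => if i.val % 2 = 0 then a else b with hf
    have hu : ∀ i : Fin 4, f (Sum.inr i) = a ∨ f (Sum.inr i) = b := by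
      intro i
      by_cases h : i.val % 2 = 0 <;> simp [hf, h]
    have hψmem : ∀ i : Fin 4, ψ (v i) = ψ (v 0) ∨ ψ (v i) = ψ (v 1) := by
      intro i
      fin_cases i
      · exact Or.inl rfl
      · exact Or.inr rfl
      · exact Or.inl hv02.symm
      · exact Or.inr hv13.symm
    have hmix : ∀ (i : Fin 4) (x : V), (x = v i ∨ x = v (i + 1)) →
        f (Sum.inr i) ≠ f (Sum.inl x) := by
      intro i x hx
      have hx' : ψ x = ψ (v 0) ∨ ψ x = ψ (v 1) := by
        rcases hx with h | h
        · exact h ▸ hψmem i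
        · exact h ▸ hψmem (i + 1)
      have hfx : f (Sum.inl x) = ψ x := rfl
      rcases hu i with h1 | h1 <;> rcases hx' with h2 | h2 <;>
        rw [h1, hfx, h2]
      exacts [hac, had, hbc, hbd]
    have hflip : ∀ i : Fin 4, f (Sum.inr i) ≠ f (Sum.inr (i + 1)) := by
      have hpar : ∀ i : Fin 4, (i + 1).val % 2 = 0 ↔ ¬ i.val % 2 = 0 := by decide
      intro i
      by_cases h : i.val % 2 = 0
      · have h' : ¬ (i + 1).val % 2 = 0 := fun hc => (hpar i).mp hc h
        simp only [hf, if_pos h, if_neg h']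
        exact hab
      · have h' : (i + 1).val % 2 = 0 := (hpar i).mpr h
        simp only [hf, if_neg h, if_pos h']
        exact hab.symm
    refine ⟨⟨f, ?_⟩, rfl, rfl⟩
    intro z w hzw
    rw [ringExtension, SimpleGraph.fromRel_adj] at hzw
    obtain ⟨hne, h⟩ := hzw
    cases z with
    | inl x =>
      cases w with
      | inl y =>
        have hxy : H.Adj x y := by
          rcases h with h | h
          · exact h
          · exact h.symm
        exact ψ.valid hxy
      | inr i =>
        have hx : x = v i ∨ x = v (i + 1) := by tauto
        exact (hmix i x hx).symm
    | inr i =>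
      cases w with
      | inl x =>
        have hx : x = v i ∨ x = v (i + 1) := by tauto
        exact hmix i x hx
      | inr j =>
        rcases h with h | h
        · exact h ▸ hflip i
        · exact (h ▸ hflip j).symm
end

section
/- Let K and Q be disjoint cycles drawn in the plane with K inside the closed disk bounded by Q, let (G, Q, K) be an environment (a plane graph G with outer face bounded by Q, an internal face bounded by K, and all other faces triangles), and for i ∈ {1,2} let πᵢ be a color partition of {1,2,3,4} into two pairs and ψᵢ a proper 4-coloring of Q ∪ K. If the triple (β, κ, σ) is simultaneously a potential π₁-Kempe chain extract for ψ₁ and a potential π₂-Kempe chain extract for ψ₂, then the number of proper 4-colorings of G extending ψ₁ whose π₁-Kempe chain extract equals (β, κ, σ) equals the number of proper 4-colorings of G extending ψ₂ whose π₂-Kempe chain extract equals (β, κ, σ). -/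
open Set Topology

/-- A Jordan curve in the plane. -/
def IsJordanCurve (C : Set (ℝ × ℝ)) : Prop :=
  ∃ f : (Metric.sphere (0 : ℝ × ℝ) 1) → ℝ × ℝ,
    Continuous f ∧ Function.Injective f ∧ C = Set.range f

/-- A color partition: an equivalence on the four colors with two classes of
size two. -/
def IsColorPartition (π : Fin 4 → Fin 4 → Prop) : Prop :=
  Equivalence π ∧ ∀ c : Fin 4, {d : Fin 4 | π c d}.ncard = 2

/-- An environment: a plane graph `G` whose outer face is bounded by the
cycle `Q`, with an internal face bounded by the cycle `K`, and all other
faces triangles. -/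
structure Environment {V : Type*} (G : SimpleGraph V) {m k : ℕ}
    [NeZero m] [NeZero k] (Q : Fin m → V) (K : Fin k → V) where
  emb : PlaneEmbedding G
  hm : 3 ≤ m
  hk : 3 ≤ k
  Q_inj : Function.Injective Q
  K_inj : Function.Injective K
  QK_disj : ∀ i j, Q i ≠ K j
  Q_adj : ∀ i, G.Adj (Q i) (Q (i + 1))
  K_adj : ∀ i, G.Adj (K i) (K (i + 1))
  outerFace : Set (ℝ × ℝ)
  innerFace : Set (ℝ × ℝ)
  outer_isOuter : emb.IsOuterFace outerFace
  outer_boundary : frontier outerFace = ⋃ i, emb.arc (Q i) (Q (i + 1))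
  inner_isFace : emb.IsFace innerFace
  inner_bounded : Bornology.IsBounded innerFace
  inner_boundary : frontier innerFace = ⋃ i, emb.arc (K i) (K (i + 1))
  other_tri : ∀ F, emb.IsFace F → F ≠ outerFace → F ≠ innerFace →
    ∃ a b c : V, G.Adj a b ∧ G.Adj b c ∧ G.Adj a c ∧ emb.BoundedByTri F a b c

section Extracts

variable {V : Type*} {G : SimpleGraph V} {m k : ℕ} [NeZero m] [NeZero k]
  {Q : Fin m → V} {K : Fin k → V}

/-- The vertices of the two boundary cycles. -/
def cycleVerts (Q : Fin m → V) (K : Fin k → V) : Set V :=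
  Set.range Q ∪ Set.range K

/-- The indices of the edges of the two boundary cycles. -/
abbrev EdgeIdx (m k : ℕ) := Fin m ⊕ Fin k

/-- The first endpoint of a boundary edge. -/
def ep1 (Q : Fin m → V) (K : Fin k → V) : EdgeIdx m k → V := Sum.elim Q K

/-- The second endpoint of a boundary edge. -/
def ep2 (Q : Fin m → V) (K : Fin k → V) : EdgeIdx m k → V :=
  Sum.elim (fun i => Q (i + 1)) (fun i => K (i + 1))

/-- A 4-coloring proper on both boundary cycles. -/
def ProperOnCycles (Q : Fin m → V) (K : Fin k → V) (ψ : V → Fin 4) : Prop :=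
  (∀ i, ψ (Q i) ≠ ψ (Q (i + 1))) ∧ (∀ i, ψ (K i) ≠ ψ (K (i + 1)))

/-- The boundary edges whose endpoints get `π`-inequivalent colors by `ψ`. -/
def nonMono (Q : Fin m → V) (K : Fin k → V) (π : Fin 4 → Fin 4 → Prop)
    (ψ : V → Fin 4) : Set (EdgeIdx m k) :=
  {e | ¬ π (ψ (ep1 Q K e)) (ψ (ep2 Q K e))}

namespace Environment

variable (E : Environment G Q K)

/-- The drawings of the two boundary cycles. -/
def boundaryCurve : Set (ℝ × ℝ) :=
  (⋃ i, E.emb.arc (Q i) (Q (i + 1))) ∪ ⋃ i, E.emb.arc (K i) (K (i + 1))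

/-- The closed annulus between the cycles `K` and `Q`. -/
def annulus : Set (ℝ × ℝ) := {p | p ∉ E.outerFace ∧ p ∉ E.innerFace}

/-- The arc drawing a boundary edge. -/
def edgeArc (e : EdgeIdx m k) : Set (ℝ × ℝ) :=
  E.emb.arc (ep1 Q K e) (ep2 Q K e)


/-- Condition (iv) of the definition of a potential Kempe chain extract:
there is a "realizer", a plane graph consisting of a perfect matching on the
non-monochromatic boundary edges (arcs joining interior points of the
matched edges, drawn in the annulus) together possibly with a disjoint
Jordan curve, such that two boundary vertices are `κ`-equivalent exactly
when they lie in the same arcwise-connected piece of the annulus minus the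
realizer. -/
def HasRealizer (π : Fin 4 → Fin 4 → Prop) (ψ : V → Fin 4)
    (κ : V → V → Prop) : Prop :=
  ∃ (M : EdgeIdx m k → EdgeIdx m k) (pt : EdgeIdx m k → ℝ × ℝ)
    (A : EdgeIdx m k → Set (ℝ × ℝ)) (Cyc : Set (ℝ × ℝ)),
    (∀ e ∈ nonMono Q K π ψ, M e ∈ nonMono Q K π ψ ∧ M (M e) = e ∧ M e ≠ e) ∧
    (∀ e ∈ nonMono Q K π ψ,
      pt e ∈ E.edgeArc e \
        {E.emb.pos (ep1 Q K e), E.emb.pos (ep2 Q K e)}) ∧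
    (∀ e ∈ nonMono Q K π ψ, A (M e) = A e ∧ IsArc (pt e) (pt (M e)) (A e) ∧
      A e ⊆ E.annulus ∧ A e ∩ E.boundaryCurve = {pt e, pt (M e)}) ∧
    (∀ e ∈ nonMono Q K π ψ, ∀ e' ∈ nonMono Q K π ψ, e' ≠ e → e' ≠ M e →
      A e ∩ A e' = ∅) ∧
    (Cyc = ∅ ∨ (IsJordanCurve Cyc ∧ Cyc ⊆ E.annulus \ E.boundaryCurve ∧
      ∀ e ∈ nonMono Q K π ψ, Cyc ∩ A e = ∅)) ∧
    (∀ u ∈ cycleVerts Q K, ∀ v ∈ cycleVerts Q K,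
      (κ u v ↔ JoinedIn (E.annulus \ (Cyc ∪ ⋃ e ∈ nonMono Q K π ψ, A e))
        (E.emb.pos u) (E.emb.pos v)))

/-- `(β, κ, σ)` is a potential `π`-Kempe chain extract for `ψ`. -/
def IsPotentialExtract (π : Fin 4 → Fin 4 → Prop) (ψ : V → Fin 4)
    (β κ σ : V → V → Prop) : Prop :=
  (∀ u ∈ cycleVerts Q K, ∀ v ∈ cycleVerts Q K, (β u v ↔ π (ψ u) (ψ v))) ∧
  (∀ u ∈ cycleVerts Q K, κ u u) ∧
  (∀ u ∈ cycleVerts Q K, ∀ v ∈ cycleVerts Q K, κ u v → κ v u) ∧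
  (∀ u ∈ cycleVerts Q K, ∀ v ∈ cycleVerts Q K, ∀ w ∈ cycleVerts Q K,
    κ u v → κ v w → κ u w) ∧
  (∀ u ∈ cycleVerts Q K, ∀ v ∈ cycleVerts Q K, κ u v → β u v) ∧
  (∀ i : Fin m, π (ψ (Q i)) (ψ (Q (i + 1))) → κ (Q i) (Q (i + 1))) ∧
  (∀ i : Fin k, π (ψ (K i)) (ψ (K (i + 1))) → κ (K i) (K (i + 1))) ∧
  (∀ u ∈ cycleVerts Q K, ∀ v ∈ cycleVerts Q K,
    (σ u v ↔ κ u v ∧ ψ u = ψ v)) ∧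
  E.HasRealizer π ψ κ

end Environment

/-- The Kempe subgraph of `G` determined by the coloring `φ` and the color
partition `π`: only the edges whose endpoints get `π`-equivalent colors. -/
def kempeGraph (G : SimpleGraph V) (π : Fin 4 → Fin 4 → Prop)
    (φ : V → Fin 4) : SimpleGraph V :=
  SimpleGraph.fromRel fun a b => G.Adj a b ∧ π (φ a) (φ b)

/-- The `π`-Kempe chain extract of the coloring `φ` equals `(β, κ, σ)` (on
the boundary vertices). -/
def ExtractOfEq (G : SimpleGraph V) (Q : Fin m → V) (K : Fin k → V)
    (π : Fin 4 → Fin 4 → Prop) (φ : V → Fin 4) (β κ σ : V → V → Prop) :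
    Prop :=
  (∀ u ∈ cycleVerts Q K, ∀ v ∈ cycleVerts Q K, (β u v ↔ π (φ u) (φ v))) ∧
  (∀ u ∈ cycleVerts Q K, ∀ v ∈ cycleVerts Q K,
    (κ u v ↔ (kempeGraph G π φ).Reachable u v)) ∧
  (∀ u ∈ cycleVerts Q K, ∀ v ∈ cycleVerts Q K,
    (σ u v ↔ (kempeGraph G π φ).Reachable u v ∧ φ u = φ v))

end Extracts


/- ### Auxiliary combinatorial library for the proof ### -/

open Classical in
noncomputable def pickel {α : Type*} [Nonempty α] (S : Set α) : α :=
  if h : S.Nonempty then h.choose else Classical.arbitrary α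

lemma pickel_mem {α : Type*} [Nonempty α] {S : Set α} (h : S.Nonempty) : pickel S ∈ S := by
  rw [pickel, dif_pos h]; exact h.choose_spec

noncomputable def flipc (π : Fin 4 → Fin 4 → Prop) (c : Fin 4) : Fin 4 :=
  pickel {d | π c d ∧ d ≠ c}

noncomputable def otherc (π : Fin 4 → Fin 4 → Prop) (c : Fin 4) : Fin 4 :=
  pickel {d | ¬ π c d}

variable {π π' : Fin 4 → Fin 4 → Prop}

lemma flipc_spec (hπ : IsColorPartition π) (c : Fin 4) :
    π c (flipc π c) ∧ flipc π c ≠ c := by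
  have hne : ({d | π c d ∧ d ≠ c} : Set (Fin 4)).Nonempty := by
    by_contra h
    rw [Set.not_nonempty_iff_eq_empty] at h
    have hsub : {d | π c d} ⊆ ({c} : Set (Fin 4)) := by
      intro d hd
      by_contra hd'
      have : d ∈ ({d | π c d ∧ d ≠ c} : Set (Fin 4)) := ⟨hd, by simpa using hd'⟩
      simp [h] at this
    have := Set.ncard_le_ncard hsub (Set.finite_singleton c)
    simp [Set.ncard_singleton, hπ.2 c] at this
  exact pickel_mem hne

lemma mem_class_iff (hπ : IsColorPartition π) (c d : Fin 4) :
    π c d ↔ d = c ∨ d = flipc π c := by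
  constructor
  · intro hd
    by_contra hcon
    push_neg at hcon
    have h3 : ({c, flipc π c, d} : Set (Fin 4)) ⊆ {x | π c x} := by
      intro x hx
      simp only [Set.mem_insert_iff, Set.mem_singleton_iff] at hx
      rcases hx with h | h | h <;> rw [h]
      · exact hπ.1.refl c
      · exact (flipc_spec hπ c).1
      · exact hd
    have hm1 : c ∉ ({flipc π c, d} : Set (Fin 4)) := by
      simp only [Set.mem_insert_iff, Set.mem_singleton_iff]
      push_neg
      exact ⟨Ne.symm (flipc_spec hπ c).2, Ne.symm hcon.1⟩
    have hm2 : flipc π c ∉ ({d} : Set (Fin 4)) := by simpa using Ne.symm hcon.2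
    have hcard : ({c, flipc π c, d} : Set (Fin 4)).ncard = 3 := by
      rw [Set.ncard_insert_of_notMem hm1 (Set.toFinite _),
        Set.ncard_insert_of_notMem hm2 (Set.toFinite _), Set.ncard_singleton]
    have := Set.ncard_le_ncard h3 (Set.toFinite _)
    rw [hcard, hπ.2 c] at this
    omega
  · rintro (h | h) <;> rw [h]
    · exact hπ.1.refl c
    · exact (flipc_spec hπ c).1

lemma eq_flipc (hπ : IsColorPartition π) {c d : Fin 4} (h : π c d) (h' : d ≠ c) :
    d = flipc π c :=
  ((mem_class_iff hπ c d).mp h).resolve_left h'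

lemma flipc_invol (hπ : IsColorPartition π) (c : Fin 4) : flipc π (flipc π c) = c := by
  have h1 := flipc_spec hπ (flipc π c)
  have h2 := flipc_spec hπ c
  have : π c (flipc π (flipc π c)) := hπ.1.trans h2.1 h1.1
  rcases (mem_class_iff hπ c _).mp this with h | h
  · exact h
  · exact absurd h h1.2

lemma otherc_spec (hπ : IsColorPartition π) (c : Fin 4) : ¬ π c (otherc π c) := by
  have hne : ({d | ¬ π c d} : Set (Fin 4)).Nonempty := by
    by_contra h
    rw [Set.not_nonempty_iff_eq_empty] at h
    have huniv : {d | π c d} = (Set.univ : Set (Fin 4)) := by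
      ext d
      simp only [Set.mem_setOf_eq, Set.mem_univ, iff_true]
      by_contra hd
      have : d ∈ ({d | ¬ π c d} : Set (Fin 4)) := hd
      simp [h] at this
    have h4 := hπ.2 c
    rw [huniv, Set.ncard_univ] at h4
    simp [Nat.card_eq_fintype_card] at h4
  exact pickel_mem hne

lemma two_classes (hπ : IsColorPartition π) (c x : Fin 4) :
    π c x ∨ π (otherc π c) x := by
  by_contra h
  push_neg at h
  obtain ⟨h1, h2⟩ := h
  set A := {d | π c d} with hA
  set B := {d | π (otherc π c) d} with hB
  set C := {d | π x d} with hC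
  have disj : ∀ a b : Fin 4, ¬ π a b → Disjoint {d | π a d} {d | π b d} := by
    intro a b hab
    rw [Set.disjoint_iff_inter_eq_empty]
    ext d
    simp only [Set.mem_inter_iff, Set.mem_setOf_eq, Set.mem_empty_iff_false, iff_false]
    rintro ⟨hd1, hd2⟩
    exact hab (hπ.1.trans hd1 (hπ.1.symm hd2))
  have dAB : Disjoint A B := disj _ _ (otherc_spec hπ c)
  have dAC : Disjoint A C := disj _ _ h1
  have dBC : Disjoint B C := disj _ _ h2
  have hU : (A ∪ B ∪ C).ncard = 6 := by
    rw [Set.ncard_union_eq (Set.disjoint_union_left.mpr ⟨dAC, dBC⟩) (Set.toFinite _) (Set.toFinite _),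
      Set.ncard_union_eq dAB (Set.toFinite _) (Set.toFinite _), hA, hB, hC, hπ.2, hπ.2, hπ.2]
  have := Set.ncard_le_ncard (Set.subset_univ (A ∪ B ∪ C)) Set.finite_univ
  rw [hU, Set.ncard_univ] at this
  simp [Nat.card_eq_fintype_card] at this

lemma two_iff (hπ : IsColorPartition π) (c x y : Fin 4) :
    π x y ↔ (π c x ↔ π c y) := by
  constructor
  · intro h
    exact ⟨fun hx => hπ.1.trans hx h, fun hy => hπ.1.trans hy (hπ.1.symm h)⟩
  · intro h
    by_cases hx : π c x
    · exact hπ.1.trans (hπ.1.symm hx) (h.mp hx)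
    · have hy : ¬ π c y := fun hy => hx (h.mpr hy)
      have hox := (two_classes hπ c x).resolve_left hx
      have hoy := (two_classes hπ c y).resolve_left hy
      exact hπ.1.trans (hπ.1.symm hox) hoy

-- appended to part.lean content
noncomputable def twist (π π' : Fin 4 → Fin 4 → Prop) (r r' x : Fin 4) : Fin 4 :=
  if x = r then r'
  else if x = flipc π r then flipc π' r'
  else if x = otherc π r then otherc π' r'
  else flipc π' (otherc π' r')

section TwistLemmas

variable {π π' : Fin 4 → Fin 4 → Prop}

lemma d_fr (hπ : IsColorPartition π) (r : Fin 4) : flipc π r ≠ r := (flipc_spec hπ r).2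

lemma d_or (hπ : IsColorPartition π) (r : Fin 4) : otherc π r ≠ r := by
  intro h
  exact otherc_spec hπ r (by rw [h]; exact hπ.1.refl r)

lemma d_of (hπ : IsColorPartition π) (r : Fin 4) : otherc π r ≠ flipc π r := by
  intro h
  exact otherc_spec hπ r (h ▸ (flipc_spec hπ r).1)

lemma pi_r_flipo (hπ : IsColorPartition π) (r : Fin 4) : ¬ π r (flipc π (otherc π r)) := by
  intro h
  exact otherc_spec hπ r (hπ.1.trans h (hπ.1.symm (flipc_spec hπ (otherc π r)).1))

lemma d_for (hπ : IsColorPartition π) (r : Fin 4) : flipc π (otherc π r) ≠ r := by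
  intro h
  exact pi_r_flipo hπ r (by rw [h]; exact hπ.1.refl r)

lemma d_fof (hπ : IsColorPartition π) (r : Fin 4) : flipc π (otherc π r) ≠ flipc π r := by
  intro h
  exact pi_r_flipo hπ r (h ▸ (flipc_spec hπ r).1)

lemma d_foo (hπ : IsColorPartition π) (r : Fin 4) : flipc π (otherc π r) ≠ otherc π r :=
  (flipc_spec hπ (otherc π r)).2

lemma quad (hπ : IsColorPartition π) (r x : Fin 4) :
    x = r ∨ x = flipc π r ∨ x = otherc π r ∨ x = flipc π (otherc π r) := by
  rcases two_classes hπ r x with h | h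
  · rcases (mem_class_iff hπ r x).mp h with h | h
    · exact Or.inl h
    · exact Or.inr (Or.inl h)
  · rcases (mem_class_iff hπ (otherc π r) x).mp h with h | h
    · exact Or.inr (Or.inr (Or.inl h))
    · exact Or.inr (Or.inr (Or.inr h))

lemma twist_base (r r' : Fin 4) : twist π π' r r' r = r' := by simp [twist]

lemma twist_flip (hπ : IsColorPartition π) (r r' : Fin 4) :
    twist π π' r r' (flipc π r) = flipc π' r' := by
  rw [twist, if_neg (d_fr hπ r), if_pos rfl]

lemma twist_other (hπ : IsColorPartition π) (r r' : Fin 4) :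
    twist π π' r r' (otherc π r) = otherc π' r' := by
  rw [twist, if_neg (d_or hπ r), if_neg (d_of hπ r), if_pos rfl]

lemma twist_flipother (hπ : IsColorPartition π) (r r' : Fin 4) :
    twist π π' r r' (flipc π (otherc π r)) = flipc π' (otherc π' r') := by
  rw [twist, if_neg (d_for hπ r), if_neg (d_fof hπ r), if_neg (d_foo hπ r)]

lemma twist_invol (hπ : IsColorPartition π) (hπ' : IsColorPartition π') (r r' x : Fin 4) :
    twist π' π r' r (twist π π' r r' x) = x := by
  rcases quad hπ r x with h | h | h | h <;> rw [h]
  · rw [twist_base, twist_base]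
  · rw [twist_flip hπ, twist_flip hπ']
  · rw [twist_other hπ, twist_other hπ']
  · rw [twist_flipother hπ, twist_flipother hπ']

lemma twist_inj (hπ : IsColorPartition π) (hπ' : IsColorPartition π') (r r' : Fin 4) :
    Function.Injective (twist π π' r r') := by
  intro a b h
  have := twist_invol hπ hπ' r r' a
  rw [h, twist_invol hπ hπ' r r' b] at this
  exact this.symm

lemma twist_class (hπ : IsColorPartition π) (hπ' : IsColorPartition π') (r r' x : Fin 4) :
    π' r' (twist π π' r r' x) ↔ π r x := by
  rcases quad hπ r x with h | h | h | h <;> rw [h]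
  · rw [twist_base]
    exact iff_of_true (hπ'.1.refl r') (hπ.1.refl r)
  · rw [twist_flip hπ]
    exact iff_of_true (flipc_spec hπ' r').1 (flipc_spec hπ r).1
  · rw [twist_other hπ]
    exact iff_of_false (otherc_spec hπ' r') (otherc_spec hπ r)
  · rw [twist_flipother hπ]
    exact iff_of_false (pi_r_flipo hπ' r') (pi_r_flipo hπ r)

end TwistLemmas

section Transfer

variable {V : Type*} [Nonempty V] {m k : ℕ}

/-- boundary vertices reachable in the Kempe graph. -/
def kset (G : SimpleGraph V) (Q : Fin m → V) (K : Fin k → V)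
    (π : Fin 4 → Fin 4 → Prop) (φ : V → Fin 4) (v : V) : Set V :=
  {u | u ∈ cycleVerts Q K ∧ (kempeGraph G π φ).Reachable v u}

/-- boundary vertices reachable in G. -/
def gset (G : SimpleGraph V) (Q : Fin m → V) (K : Fin k → V) (v : V) : Set V :=
  {u | u ∈ cycleVerts Q K ∧ G.Reachable v u}

open Classical in
noncomputable def refp (S T : Set V) (ψ ψ' : V → Fin 4) : Fin 4 × Fin 4 :=
  if S.Nonempty then (ψ (pickel S), ψ' (pickel S))
  else if T.Nonempty then (ψ (pickel T), ψ' (pickel T)) else (0, 0)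

lemma refp_swap (S T : Set V) (ψ ψ' : V → Fin 4) :
    refp S T ψ' ψ = ((refp S T ψ ψ').2, (refp S T ψ ψ').1) := by
  unfold refp
  split_ifs <;> rfl

noncomputable def transfer (G : SimpleGraph V) (Q : Fin m → V) (K : Fin k → V)
    (π π' : Fin 4 → Fin 4 → Prop) (ψ ψ' φ : V → Fin 4) (v : V) : Fin 4 :=
  twist π π' (refp (kset G Q K π φ v) (gset G Q K v) ψ ψ').1
    (refp (kset G Q K π φ v) (gset G Q K v) ψ ψ').2 (φ v)

variable {G : SimpleGraph V} {Q : Fin m → V} {K : Fin k → V}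
  {π₁ π₂ : Fin 4 → Fin 4 → Prop} {ψ₁ ψ₂ φ : V → Fin 4} {β κ σ : V → V → Prop}

lemma kempe_le : kempeGraph G π₁ φ ≤ G := by
  intro a b hab
  rw [kempeGraph, SimpleGraph.fromRel_adj] at hab
  rcases hab.2 with h | h
  · exact h.1
  · exact h.1.symm

lemma kempe_adj_pi (hπ₁ : IsColorPartition π₁) {a b : V}
    (h : (kempeGraph G π₁ φ).Adj a b) : π₁ (φ a) (φ b) := by
  rw [kempeGraph, SimpleGraph.fromRel_adj] at h
  rcases h.2 with h | h
  · exact h.2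
  · exact hπ₁.1.symm h.2

lemma kempe_reach_pi (hπ₁ : IsColorPartition π₁) {a b : V}
    (h : (kempeGraph G π₁ φ).Reachable a b) : π₁ (φ a) (φ b) := by
  obtain ⟨p⟩ := h
  induction p with
  | nil => exact hπ₁.1.refl _
  | cons h q ih => exact hπ₁.1.trans (kempe_adj_pi hπ₁ h) ih

lemma kset_congr {v w : V} (h : (kempeGraph G π₁ φ).Reachable v w) :
    kset G Q K π₁ φ v = kset G Q K π₁ φ w := by
  ext u
  exact and_congr_right fun _ => ⟨fun hr => h.symm.trans hr, fun hr => h.trans hr⟩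

lemma gset_congr {v w : V} (h : G.Reachable v w) :
    gset G Q K v = gset G Q K w := by
  ext u
  exact and_congr_right fun _ => ⟨fun hr => h.symm.trans hr, fun hr => h.trans hr⟩

section Main

variable (hπ₁ : IsColorPartition π₁) (hπ₂ : IsColorPartition π₂)
  (hβ₁ : ∀ u ∈ cycleVerts Q K, ∀ v ∈ cycleVerts Q K, (β u v ↔ π₁ (ψ₁ u) (ψ₁ v)))
  (hβ₂ : ∀ u ∈ cycleVerts Q K, ∀ v ∈ cycleVerts Q K, (β u v ↔ π₂ (ψ₂ u) (ψ₂ v)))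
  (hσ₁ : ∀ u ∈ cycleVerts Q K, ∀ v ∈ cycleVerts Q K, (σ u v ↔ κ u v ∧ ψ₁ u = ψ₁ v))
  (hσ₂ : ∀ u ∈ cycleVerts Q K, ∀ v ∈ cycleVerts Q K, (σ u v ↔ κ u v ∧ ψ₂ u = ψ₂ v))
  (hφ : ∀ ⦃a b : V⦄, G.Adj a b → φ a ≠ φ b)
  (hext : ∀ v ∈ cycleVerts Q K, φ v = ψ₁ v)
  (hκ : ∀ u ∈ cycleVerts Q K, ∀ v ∈ cycleVerts Q K,
    (κ u v ↔ (kempeGraph G π₁ φ).Reachable u v))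

include hπ₁ hπ₂ hβ₁ hβ₂ hext in
/-- pointwise class lemma, relative to the G-component anchor. -/
lemma transfer_pv (v : V) :
    π₂ (refp (gset G Q K v) (gset G Q K v) ψ₁ ψ₂).2 (transfer G Q K π₁ π₂ ψ₁ ψ₂ φ v) ↔
      π₁ (refp (gset G Q K v) (gset G Q K v) ψ₁ ψ₂).1 (φ v) := by
  classical
  unfold transfer refp
  by_cases hS : (kset G Q K π₁ φ v).Nonempty
  · obtain ⟨hu1, hu2⟩ := pickel_mem hS
    set u := pickel (kset G Q K π₁ φ v) with hudef
    have hT : (gset G Q K v).Nonempty := ⟨u, hu1, hu2.mono kempe_le⟩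
    obtain ⟨ha1, ha2⟩ := pickel_mem hT
    set a := pickel (gset G Q K v) with hadef
    simp only [if_pos hS, if_pos hT]
    have hπuv : π₁ (ψ₁ u) (φ v) := by
      rw [← hext u hu1]
      exact hπ₁.1.symm (kempe_reach_pi hπ₁ hu2)
    have htw : π₂ (ψ₂ u) (twist π₁ π₂ (ψ₁ u) (ψ₂ u) (φ v)) :=
      (twist_class hπ₁ hπ₂ _ _ _).mpr hπuv
    show π₂ (ψ₂ a) (twist π₁ π₂ (ψ₁ u) (ψ₂ u) (φ v)) ↔ π₁ (ψ₁ a) (φ v)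
    calc π₂ (ψ₂ a) (twist π₁ π₂ (ψ₁ u) (ψ₂ u) (φ v))
        ↔ π₂ (ψ₂ a) (ψ₂ u) := (two_iff hπ₂ (ψ₂ a) _ _).mp (hπ₂.1.symm htw)
      _ ↔ β a u := (hβ₂ a ha1 u hu1).symm
      _ ↔ π₁ (ψ₁ a) (ψ₁ u) := hβ₁ a ha1 u hu1
      _ ↔ π₁ (ψ₁ a) (φ v) := (two_iff hπ₁ (ψ₁ a) _ _).mp hπuv
  · by_cases hT : (gset G Q K v).Nonempty
    · set a := pickel (gset G Q K v) with hadef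
      simp only [if_neg hS, if_pos hT]
      show π₂ (ψ₂ a) (twist π₁ π₂ (ψ₁ a) (ψ₂ a) (φ v)) ↔ π₁ (ψ₁ a) (φ v)
      exact twist_class hπ₁ hπ₂ _ _ _
    · simp only [if_neg hS, if_neg hT]
      show π₂ (0 : Fin 4) (twist π₁ π₂ 0 0 (φ v)) ↔ π₁ (0 : Fin 4) (φ v)
      exact twist_class hπ₁ hπ₂ _ _ _

include hπ₁ hπ₂ hβ₁ hβ₂ hext in
lemma transfer_pi {v w : V} (hvw : G.Reachable v w) :
    (π₂ (transfer G Q K π₁ π₂ ψ₁ ψ₂ φ v) (transfer G Q K π₁ π₂ ψ₁ ψ₂ φ w) ↔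
      π₁ (φ v) (φ w)) := by
  have hgg : gset G Q K v = gset G Q K w := gset_congr hvw
  have pv := transfer_pv hπ₁ hπ₂ hβ₁ hβ₂ hext (G := G) (Q := Q) (K := K) (φ := φ) v
  have pw := transfer_pv hπ₁ hπ₂ hβ₁ hβ₂ hext (G := G) (Q := Q) (K := K) (φ := φ) w
  rw [hgg] at pv
  calc π₂ (transfer G Q K π₁ π₂ ψ₁ ψ₂ φ v) (transfer G Q K π₁ π₂ ψ₁ ψ₂ φ w)
      ↔ _ := two_iff hπ₂ (refp (gset G Q K w) (gset G Q K w) ψ₁ ψ₂).2 _ _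
    _ ↔ (π₁ (refp (gset G Q K w) (gset G Q K w) ψ₁ ψ₂).1 (φ v) ↔
          π₁ (refp (gset G Q K w) (gset G Q K w) ψ₁ ψ₂).1 (φ w)) := iff_congr pv pw
    _ ↔ π₁ (φ v) (φ w) := (two_iff hπ₁ _ _ _).symm

include hπ₁ hπ₂ hβ₁ hβ₂ hφ hext in
lemma transfer_proper {v w : V} (hvw : G.Adj v w) :
    transfer G Q K π₁ π₂ ψ₁ ψ₂ φ v ≠ transfer G Q K π₁ π₂ ψ₁ ψ₂ φ w := by
  by_cases hp : π₁ (φ v) (φ w)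
  · have hadj : (kempeGraph G π₁ φ).Adj v w := by
      rw [kempeGraph, SimpleGraph.fromRel_adj]
      exact ⟨hvw.ne, Or.inl ⟨hvw, hp⟩⟩
    have h1 : kset G Q K π₁ φ v = kset G Q K π₁ φ w := kset_congr hadj.reachable
    have h2 : gset G Q K v = gset G Q K w := gset_congr hvw.reachable
    unfold transfer
    rw [h1, h2]
    intro h
    exact hφ hvw (twist_inj hπ₁ hπ₂ _ _ h)
  · intro h
    apply hp
    rw [← transfer_pi hπ₁ hπ₂ hβ₁ hβ₂ hext hvw.reachable, h]
    exact hπ₂.1.refl _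

include hπ₁ hπ₂ hβ₁ hβ₂ hσ₁ hσ₂ hext hκ in
lemma transfer_ext {v : V} (hv : v ∈ cycleVerts Q K) :
    transfer G Q K π₁ π₂ ψ₁ ψ₂ φ v = ψ₂ v := by
  classical
  have hS : (kset G Q K π₁ φ v).Nonempty := ⟨v, hv, SimpleGraph.Reachable.refl v⟩
  obtain ⟨hu1, hu2⟩ := pickel_mem hS
  set u := pickel (kset G Q K π₁ φ v) with hudef
  have hκvu : κ v u := (hκ v hv u hu1).mpr hu2
  have hπ1vu : π₁ (ψ₁ v) (ψ₁ u) := by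
    rw [← hext v hv, ← hext u hu1]
    exact kempe_reach_pi hπ₁ hu2
  have hrefp : refp (kset G Q K π₁ φ v) (gset G Q K v) ψ₁ ψ₂ = (ψ₁ u, ψ₂ u) := by
    rw [refp, if_pos hS]
  rw [transfer, hrefp]
  simp only
  rw [hext v hv]
  by_cases heq : ψ₁ v = ψ₁ u
  · rw [heq, twist_base]
    have hs : σ v u := (hσ₁ v hv u hu1).mpr ⟨hκvu, heq⟩
    exact (((hσ₂ v hv u hu1).mp hs).2).symm
  · have hflip : ψ₁ v = flipc π₁ (ψ₁ u) := eq_flipc hπ₁ (hπ₁.1.symm hπ1vu) heq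
    rw [hflip, twist_flip hπ₁]
    have hns : ¬ σ v u := fun hs => heq ((hσ₁ v hv u hu1).mp hs).2
    have hne2 : ψ₂ v ≠ ψ₂ u := fun h => hns ((hσ₂ v hv u hu1).mpr ⟨hκvu, h⟩)
    have hπ2 : π₂ (ψ₂ u) (ψ₂ v) := by
      rw [← hβ₂ u hu1 v hv, hβ₁ u hu1 v hv]
      exact hπ₁.1.symm hπ1vu
    exact (eq_flipc hπ₂ hπ2 hne2).symm

include hπ₁ hπ₂ hβ₁ hβ₂ hext in
lemma transfer_kempe :
    kempeGraph G π₂ (transfer G Q K π₁ π₂ ψ₁ ψ₂ φ) = kempeGraph G π₁ φ := by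
  ext v w
  rw [kempeGraph, kempeGraph, SimpleGraph.fromRel_adj, SimpleGraph.fromRel_adj]
  apply and_congr_right
  intro _
  apply or_congr
  · exact and_congr_right fun h =>
      transfer_pi hπ₁ hπ₂ hβ₁ hβ₂ hext h.reachable
  · exact and_congr_right fun h =>
      transfer_pi hπ₁ hπ₂ hβ₁ hβ₂ hext h.reachable

include hπ₁ hπ₂ hβ₁ hβ₂ hext in
lemma transfer_invol :
    transfer G Q K π₂ π₁ ψ₂ ψ₁ (transfer G Q K π₁ π₂ ψ₁ ψ₂ φ) = φ := by
  funext v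
  have hk : kempeGraph G π₂ (transfer G Q K π₁ π₂ ψ₁ ψ₂ φ) = kempeGraph G π₁ φ :=
    transfer_kempe hπ₁ hπ₂ hβ₁ hβ₂ hext
  have hkset : kset G Q K π₂ (transfer G Q K π₁ π₂ ψ₁ ψ₂ φ) v = kset G Q K π₁ φ v := by
    unfold kset
    rw [hk]
  conv_lhs => rw [transfer, hkset, refp_swap]
  exact twist_invol hπ₁ hπ₂ _ _ _

end Main

end Transfer


section MemAux

variable {V : Type*} [Nonempty V] {m k : ℕ} {G : SimpleGraph V}
  {Q : Fin m → V} {K : Fin k → V}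
  {π₁ π₂ : Fin 4 → Fin 4 → Prop} {ψ₁ ψ₂ φ : V → Fin 4} {β κ σ : V → V → Prop}

lemma transfer_mem (hπ₁ : IsColorPartition π₁) (hπ₂ : IsColorPartition π₂)
    (hβ₁ : ∀ u ∈ cycleVerts Q K, ∀ v ∈ cycleVerts Q K, (β u v ↔ π₁ (ψ₁ u) (ψ₁ v)))
    (hβ₂ : ∀ u ∈ cycleVerts Q K, ∀ v ∈ cycleVerts Q K, (β u v ↔ π₂ (ψ₂ u) (ψ₂ v)))
    (hσ₁ : ∀ u ∈ cycleVerts Q K, ∀ v ∈ cycleVerts Q K, (σ u v ↔ κ u v ∧ ψ₁ u = ψ₁ v))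
    (hσ₂ : ∀ u ∈ cycleVerts Q K, ∀ v ∈ cycleVerts Q K, (σ u v ↔ κ u v ∧ ψ₂ u = ψ₂ v))
    (hext : ∀ v ∈ cycleVerts Q K, φ v = ψ₁ v)
    (hex : ExtractOfEq G Q K π₁ φ β κ σ) :
    (∀ v ∈ cycleVerts Q K, transfer G Q K π₁ π₂ ψ₁ ψ₂ φ v = ψ₂ v) ∧
      ExtractOfEq G Q K π₂ (transfer G Q K π₁ π₂ ψ₁ ψ₂ φ) β κ σ := by
  have hκ := hex.2.1
  have hextF : ∀ v ∈ cycleVerts Q K, transfer G Q K π₁ π₂ ψ₁ ψ₂ φ v = ψ₂ v :=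
    fun v hv => transfer_ext hπ₁ hπ₂ hβ₁ hβ₂ hσ₁ hσ₂ hext hκ hv
  refine ⟨hextF, ?_, ?_, ?_⟩
  · intro u hu v hv
    rw [hextF u hu, hextF v hv]
    exact hβ₂ u hu v hv
  · intro u hu v hv
    rw [transfer_kempe hπ₁ hπ₂ hβ₁ hβ₂ hext]
    exact hκ u hu v hv
  · intro u hu v hv
    rw [transfer_kempe hπ₁ hπ₂ hβ₁ hβ₂ hext, hextF u hu, hextF v hv,
      hσ₂ u hu v hv, hκ u hu v hv]

end MemAux

/-- in an environment, if `(β, κ, σ)` is simultaneously a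
potential `π₁`-Kempe chain extract for `ψ₁` and a potential `π₂`-Kempe chain
extract for `ψ₂`, then the number of 4-colorings of `G` extending `ψ₁` with
`π₁`-extract `(β, κ, σ)` equals the number of 4-colorings extending `ψ₂`
with `π₂`-extract `(β, κ, σ)`. -/
theorem stmt_17 {V : Type*} [Fintype V] {G : SimpleGraph V} {m k : ℕ}
    [NeZero m] [NeZero k] {Q : Fin m → V} {K : Fin k → V}
    (E : Environment G Q K)
    (π₁ π₂ : Fin 4 → Fin 4 → Prop)
    (hπ₁ : IsColorPartition π₁) (hπ₂ : IsColorPartition π₂)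
    (ψ₁ ψ₂ : V → Fin 4)
    (hψ₁ : ProperOnCycles Q K ψ₁) (hψ₂ : ProperOnCycles Q K ψ₂)
    (β κ σ : V → V → Prop)
    (h₁ : E.IsPotentialExtract π₁ ψ₁ β κ σ)
    (h₂ : E.IsPotentialExtract π₂ ψ₂ β κ σ) :
    Nat.card {φ : G.Coloring (Fin 4) //
        (∀ v ∈ cycleVerts Q K, φ v = ψ₁ v) ∧ ExtractOfEq G Q K π₁ (⇑φ) β κ σ} =
    Nat.card {φ : G.Coloring (Fin 4) //
        (∀ v ∈ cycleVerts Q K, φ v = ψ₂ v) ∧ ExtractOfEq G Q K π₂ (⇑φ) β κ σ} := by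
  classical
  haveI : Nonempty V := ⟨Q ⟨0, Nat.pos_of_ne_zero (NeZero.ne m)⟩⟩
  obtain ⟨hβ₁, -, -, -, -, -, -, hσ₁, -⟩ := h₁
  obtain ⟨hβ₂, -, -, -, -, -, -, hσ₂, -⟩ := h₂
  apply Nat.card_congr
  refine
    { toFun := fun φp =>
        ⟨SimpleGraph.Coloring.mk (transfer G Q K π₁ π₂ ψ₁ ψ₂ ⇑φp.1)
            (fun {a b} hab =>
              transfer_proper hπ₁ hπ₂ hβ₁ hβ₂ (fun {a b} h => φp.1.valid h) φp.2.1 hab),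
          transfer_mem hπ₁ hπ₂ hβ₁ hβ₂ hσ₁ hσ₂ φp.2.1 φp.2.2⟩
      invFun := fun φp =>
        ⟨SimpleGraph.Coloring.mk (transfer G Q K π₂ π₁ ψ₂ ψ₁ ⇑φp.1)
            (fun {a b} hab =>
              transfer_proper hπ₂ hπ₁ hβ₂ hβ₁ (fun {a b} h => φp.1.valid h) φp.2.1 hab),
          transfer_mem hπ₂ hπ₁ hβ₂ hβ₁ hσ₂ hσ₁ φp.2.1 φp.2.2⟩
      left_inv := ?_
      right_inv := ?_ }
  · intro φp
    apply Subtype.ext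
    apply DFunLike.coe_injective
    show transfer G Q K π₂ π₁ ψ₂ ψ₁ (transfer G Q K π₁ π₂ ψ₁ ψ₂ ⇑φp.1) = ⇑φp.1
    exact transfer_invol hπ₁ hπ₂ hβ₁ hβ₂ φp.2.1
  · intro φp
    apply Subtype.ext
    apply DFunLike.coe_injective
    show transfer G Q K π₁ π₂ ψ₁ ψ₂ (transfer G Q K π₂ π₁ ψ₂ ψ₁ ⇑φp.1) = ⇑φp.1
    exact transfer_invol hπ₂ hπ₁ hβ₂ hβ₁ φp.2.1
end
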